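/- Let $X$ be a Banach space and $f : [a,b] \to X$ differentiable with Bochner-integrable derivative. Then $\left\| \int_a^b f(s)\,ds - (b-a)\cdot\frac{f\left(\frac{3a+b}{4}\right)+f\left(\frac{a+3b}{4}\right)}{2} \right\| \le \frac{1}{4}(b-a)\int_a^b \|f'(s)\|\,ds$. -/

import Mathlib

open MeasureTheory intervalIntegral Set
open scoped Interval

/-! Integrating by parts, `∫ s in u..c, f s - (c - u) • f c = -∫ s in u..c, (s - u) • f' s`, so the
one-point rule at an endpoint of an interval of length `ℓ` errs by at most `ℓ * ∫ ‖f'‖`. Applied on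
both halves of `[u, v]` this bounds the midpoint-rule error by `(v - u) / 2 * ∫ ‖f'‖`, and the
quarter-point rule is the midpoint rule applied on the two halves of `[a, b]`. -/

section

variable {X : Type*} [NormedAddCommGroup X] [NormedSpace ℝ X] {f f' : ℝ → X} {u c v : ℝ}

theorem norm_integral_sub_add_le_of_split {g : ℝ → ℝ} {A B : X} {K : ℝ}
    (hf₁ : IntervalIntegrable f volume u c) (hf₂ : IntervalIntegrable f volume c v)
    (hg₁ : IntervalIntegrable g volume u c) (hg₂ : IntervalIntegrable g volume c v)
    (h₁ : ‖(∫ s in u..c, f s) - A‖ ≤ K * ∫ s in u..c, g s)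
    (h₂ : ‖(∫ s in c..v, f s) - B‖ ≤ K * ∫ s in c..v, g s) :
    ‖(∫ s in u..v, f s) - (A + B)‖ ≤ K * ∫ s in u..v, g s := by
  rw [← integral_add_adjacent_intervals hf₁ hf₂, ← integral_add_adjacent_intervals hg₁ hg₂,
    add_sub_add_comm, mul_add]
  exact (norm_add_le _ _).trans (add_le_add h₁ h₂)

variable [CompleteSpace X]

theorem integral_sub_smul_right_eq (hd : ∀ t ∈ [[u, c]], HasDerivAt f (f' t) t)
    (hi : IntervalIntegrable f' volume u c) :
    (∫ s in u..c, f s) - (c - u) • f c = -∫ s in u..c, (s - u) • f' s := by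
  have hparts := integral_smul_deriv_eq_deriv_smul
    (fun t _ => (hasDerivAt_id t).sub_const u) hd intervalIntegrable_const hi
  simp only [id, sub_self, zero_smul, sub_zero, one_smul] at hparts
  rw [hparts, neg_sub]

theorem norm_integral_sub_smul_right_le (hd : ∀ t ∈ [[u, c]], HasDerivAt f (f' t) t)
    (hi : IntervalIntegrable f' volume u c) :
    ‖(∫ s in u..c, f s) - (c - u) • f c‖ ≤ |c - u| * |∫ s in u..c, ‖f' s‖| := by
  rw [integral_sub_smul_right_eq hd hi, norm_neg, ← abs_abs (c - u), ← abs_mul,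
    ← intervalIntegral.integral_const_mul]
  refine norm_integral_le_abs_of_norm_le ?_ (hi.norm.const_mul _)
  filter_upwards [ae_restrict_mem measurableSet_uIoc] with s hs
  rw [norm_smul, Real.norm_eq_abs]
  exact mul_le_mul_of_nonneg_right (abs_sub_left_of_mem_uIcc (uIoc_subset_uIcc hs))
    (norm_nonneg _)

theorem norm_integral_sub_smul_left_le (hd : ∀ t ∈ [[c, v]], HasDerivAt f (f' t) t)
    (hi : IntervalIntegrable f' volume c v) :
    ‖(∫ s in c..v, f s) - (v - c) • f c‖ ≤ |v - c| * |∫ s in c..v, ‖f' s‖| := by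
  calc ‖(∫ s in c..v, f s) - (v - c) • f c‖ = ‖(∫ s in v..c, f s) - (c - v) • f c‖ := by
        rw [integral_symm v c, ← norm_neg, ← neg_sub c v, neg_smul, neg_sub, sub_neg_eq_add,
          neg_add_eq_sub]
    _ ≤ |c - v| * |∫ s in v..c, ‖f' s‖| :=
        norm_integral_sub_smul_right_le (by rwa [uIcc_comm]) hi.symm
    _ = |v - c| * |∫ s in c..v, ‖f' s‖| := by rw [abs_sub_comm, integral_symm, abs_neg]

theorem norm_integral_sub_smul_midpoint_le (huv : u ≤ v)
    (hd : ∀ t ∈ [[u, v]], HasDerivAt f (f' t) t) (hi : IntervalIntegrable f' volume u v) :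
    ‖(∫ s in u..v, f s) - (v - u) • f ((u + v) / 2)‖ ≤ (v - u) / 2 * ∫ s in u..v, ‖f' s‖ := by
  set c := (u + v) / 2 with hc
  have huc : u ≤ c := by linarith
  have hcv : c ≤ v := by linarith
  have hf : IntervalIntegrable f volume u v :=
    ContinuousOn.intervalIntegrable fun t ht => (hd t ht).continuousAt.continuousWithinAt
  have hcmem : c ∈ [[u, v]] := by rw [uIcc_of_le huv]; exact ⟨huc, hcv⟩
  have hsub₁ : [[u, c]] ⊆ [[u, v]] := uIcc_subset_uIcc_left hcmem
  have hsub₂ : [[c, v]] ⊆ [[u, v]] := uIcc_subset_uIcc_right hcmem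
  have h₁ := norm_integral_sub_smul_right_le (fun t ht => hd t (hsub₁ ht)) (hi.mono_set hsub₁)
  have h₂ := norm_integral_sub_smul_left_le (fun t ht => hd t (hsub₂ ht)) (hi.mono_set hsub₂)
  rw [abs_of_nonneg (by linarith), abs_of_nonneg (integral_nonneg huc fun _ _ => norm_nonneg _),
    show c - u = (v - u) / 2 by linarith] at h₁
  rw [abs_of_nonneg (by linarith), abs_of_nonneg (integral_nonneg hcv fun _ _ => norm_nonneg _),
    show v - c = (v - u) / 2 by linarith] at h₂
  rw [show (v - u) • f c = ((v - u) / 2) • f c + ((v - u) / 2) • f c by rw [← add_smul]; ring_nf]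
  exact norm_integral_sub_add_le_of_split (hf.mono_set hsub₁) (hf.mono_set hsub₂)
    (hi.norm.mono_set hsub₁) (hi.norm.mono_set hsub₂) h₁ h₂

end

theorem stmt15 {X : Type*} [NormedAddCommGroup X] [NormedSpace ℝ X] [CompleteSpace X]
    {a b : ℝ} (hab : a < b) {f f' : ℝ → X}
    (hderiv : ∀ t ∈ Set.Icc a b, HasDerivAt f (f' t) t)
    (hint : IntervalIntegrable f' volume a b) :
    ‖(∫ s in a..b, f s) - ((b - a) / 2) • (f ((3 * a + b) / 4) + f ((a + 3 * b) / 4))‖ ≤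
      (1 / 4) * (b - a) * (∫ s in a..b, ‖f' s‖) := by
  set m := (a + b) / 2 with hm
  have hmab : m ∈ [[a, b]] := by rw [uIcc_of_le hab.le]; constructor <;> linarith
  have hsub₁ : [[a, m]] ⊆ [[a, b]] := uIcc_subset_uIcc_left hmab
  have hsub₂ : [[m, b]] ⊆ [[a, b]] := uIcc_subset_uIcc_right hmab
  rw [← uIcc_of_le hab.le] at hderiv
  have hf : IntervalIntegrable f volume a b :=
    ContinuousOn.intervalIntegrable fun t ht => (hderiv t ht).continuousAt.continuousWithinAt
  have h₁ := norm_integral_sub_smul_midpoint_le (by linarith)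
    (fun t ht => hderiv t (hsub₁ ht)) (hint.mono_set hsub₁)
  have h₂ := norm_integral_sub_smul_midpoint_le (by linarith)
    (fun t ht => hderiv t (hsub₂ ht)) (hint.mono_set hsub₂)
  rw [show (a + m) / 2 = (3 * a + b) / 4 by linarith, show m - a = (b - a) / 2 by linarith,
    show (b - a) / 2 / 2 = 1 / 4 * (b - a) by ring] at h₁
  rw [show (m + b) / 2 = (a + 3 * b) / 4 by linarith, show b - m = (b - a) / 2 by linarith,
    show (b - a) / 2 / 2 = 1 / 4 * (b - a) by ring] at h₂
  rw [smul_add]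
  exact norm_integral_sub_add_le_of_split (hf.mono_set hsub₁) (hf.mono_set hsub₂)
    (hint.norm.mono_set hsub₁) (hint.norm.mono_set hsub₂) h₁ h₂
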